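/- Let V be a real-valued potential on ℝ³ satisfying assumption (V) with exponent p < 3/2, a = |V|^{1/2}, b = |V|^{1/2} sign(V), and let Ω be a compact subset of {Im k ≥ 0}∖{0}. Set ρ_0 = (3−p)/(2p) > 1/2. Then for every 0 < ρ < min(ρ_0, 1) there is a constant C such that for all k ∈ Ω and 0 < ε < 1, ‖ b G_0(kε) a − b D_0 a − (ikε/4π) b ⊗ a ‖_{HS} ≤ C |kε|^{1+ρ}, where b D_0 a is the Hilbert–Schmidt operator with kernel b(x) a(y)/(4π|x−y|), b ⊗ a is the rank-one operator with kernel b(x) a(y), and ‖·‖_{HS} is the Hilbert–Schmidt norm. -/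

import Mathlib

/-!
With `r = |x - y|` and `w = i k ε r` (so `Re w ≤ 0`), the kernel equals
`b(x) a(y) (e^w - 1 - w) / (4π r)`, and `|e^w - 1 - w| ≤ 3 |w|^(1+ρ)` for `0 ≤ ρ ≤ 1`.
Since `r^ρ ≤ ⟨x⟩^ρ ⟨y⟩^ρ`, the kernel is dominated by `(3/4π) |kε|^(1+ρ)` times the tensor
product of `⟨x⟩^ρ |V(x)|^(1/2)` with itself, whose `L²(ℝ³ × ℝ³)`-norm is `∫ ⟨x⟩^(2ρ) |V|`.
That integral is finite by Hölder: `⟨x⟩^(2ρ) V = ⟨x⟩^(2ρ-2) · ⟨x⟩² V` with `⟨x⟩² V ∈ L^p`, and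
`⟨x⟩^(2ρ-2) ∈ L^p'` exactly when `3 (p - 1) < 2 (1 - ρ) p`, i.e. `ρ < (3 - p) / (2p)`.
-/

open MeasureTheory Complex Filter Topology Set

noncomputable section

/-- Euclidean space `ℝ³`. -/
abbrev R3 := EuclideanSpace ℝ (Fin 3)

/-- Assumption (V): `⟨x⟩² V ∈ (L^p ∩ L^q)(ℝ³)` for some `p < 3/2` and `q > 3`. -/
def AssumptionV (V : R3 → ℝ) (p q : ℝ) : Prop :=
  1 ≤ p ∧ p < 3 / 2 ∧ 3 < q ∧
    MemLp (fun x => (1 + ‖x‖ ^ 2) * V x) (ENNReal.ofReal p) (volume : Measure R3) ∧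
    MemLp (fun x => (1 + ‖x‖ ^ 2) * V x) (ENNReal.ofReal q) (volume : Measure R3)

open scoped ENNReal
open Module

lemma norm_cexp_sub_one_sub_le_rpow {ρ : ℝ} (hρ0 : 0 ≤ ρ) (hρ1 : ρ ≤ 1) {w : ℂ} (hw : w.re ≤ 0) :
    ‖cexp w - 1 - w‖ ≤ 3 * ‖w‖ ^ (1 + ρ) := by
  rcases le_total ‖w‖ 1 with hle | hge
  · calc ‖cexp w - 1 - w‖ ≤ ‖w‖ ^ 2 := norm_exp_sub_one_sub_id_le hle
      _ = ‖w‖ ^ (2 : ℝ) := (Real.rpow_two _).symm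
      _ ≤ ‖w‖ ^ (1 + ρ) := Real.rpow_le_rpow_of_exponent_ge' (norm_nonneg w) hle (by positivity)
          (by linarith)
      _ ≤ 3 * ‖w‖ ^ (1 + ρ) := by linarith [Real.rpow_nonneg (norm_nonneg w) (1 + ρ)]
  · have hexp : ‖cexp w‖ ≤ 1 := by rwa [norm_exp, Real.exp_le_one_iff]
    calc ‖cexp w - 1 - w‖ ≤ ‖cexp w‖ + 1 + ‖w‖ := by
          linarith [norm_sub_le (cexp w - 1) w, norm_sub_le (cexp w) 1, norm_one (α := ℂ)]
      _ ≤ 3 * ‖w‖ := by linarith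
      _ = 3 * ‖w‖ ^ (1 : ℝ) := by rw [Real.rpow_one]
      _ ≤ 3 * ‖w‖ ^ (1 + ρ) := by
          gcongr 3 * ?_
          exact Real.rpow_le_rpow_of_exponent_le hge (by linarith)

lemma norm_sub_rpow_le_one_add_norm_sq_rpow_mul {E : Type*} [SeminormedAddCommGroup E] {ρ : ℝ}
    (hρ : 0 ≤ ρ) (x y : E) :
    ‖x - y‖ ^ ρ ≤ (1 + ‖x‖ ^ 2) ^ (ρ / 2) * (1 + ‖y‖ ^ 2) ^ (ρ / 2) := by
  have hsq : ‖x - y‖ ^ 2 ≤ (1 + ‖x‖ ^ 2) * (1 + ‖y‖ ^ 2) := by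
    nlinarith [norm_sub_le x y, norm_nonneg (x - y), sq_nonneg (‖x‖ * ‖y‖ - 1)]
  calc ‖x - y‖ ^ ρ = (‖x - y‖ ^ 2) ^ (ρ / 2) := by
        rw [← Real.rpow_two, ← Real.rpow_mul (norm_nonneg _)]; ring_nf
    _ ≤ ((1 + ‖x‖ ^ 2) * (1 + ‖y‖ ^ 2)) ^ (ρ / 2) := by gcongr
    _ = _ := Real.mul_rpow (by positivity) (by positivity)

lemma Real.rpow_div_two_mul_sqrt_abs {t : ℝ} (ht : 0 ≤ t) (ρ v : ℝ) :
    t ^ (ρ / 2) * √|v| = √|t ^ ρ * v| := by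
  rw [abs_mul, Real.sqrt_mul (abs_nonneg _), abs_of_nonneg (Real.rpow_nonneg ht ρ),
    Real.sqrt_eq_rpow (t ^ ρ), ← Real.rpow_mul ht, mul_one_div]

lemma abs_sqrt_abs_mul_sign (v : ℝ) : |√|v| * Real.sign v| = √|v| := by
  rcases lt_trichotomy v 0 with h | h | h <;> simp [h, Real.sign_of_neg, Real.sign_of_pos]

section Weight

variable {E : Type*} [NormedAddCommGroup E] [NormedSpace ℝ E] [FiniteDimensional ℝ E]
  [MeasurableSpace E] [BorelSpace E] {μ : Measure E} [μ.IsAddHaarMeasure]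

lemma memLp_one_add_norm_sq_rpow_neg {s r : ℝ} (hr : 0 < r)
    (hsr : (finrank ℝ E : ℝ) < 2 * s * r) :
    MemLp (fun x : E => (1 + ‖x‖ ^ 2) ^ (-s)) (ENNReal.ofReal r) μ := by
  rw [← integrable_norm_rpow_iff (by fun_prop : Measurable _).aestronglyMeasurable
    (by simpa using hr) ENNReal.ofReal_ne_top, ENNReal.toReal_ofReal hr.le]
  refine (integrable_rpow_neg_one_add_norm_sq (μ := μ) hsr).congr (ae_of_all _ fun x => ?_)
  have hx : (0 : ℝ) < 1 + ‖x‖ ^ 2 := by positivity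
  dsimp only
  rw [Real.norm_of_nonneg (Real.rpow_nonneg hx.le _), ← Real.rpow_mul hx.le]
  ring_nf

lemma integrable_one_add_norm_sq_rpow_mul {V : E → ℝ} {p ρ : ℝ} (hp : 1 ≤ p)
    (hV : MemLp (fun x => (1 + ‖x‖ ^ 2) * V x) (ENNReal.ofReal p) μ)
    (hρ : finrank ℝ E * (p - 1) < 2 * (1 - ρ) * p) :
    Integrable (fun x => (1 + ‖x‖ ^ 2) ^ ρ * V x) μ := by
  have hsplit : (fun x => (1 + ‖x‖ ^ 2) ^ ρ * V x)
      = fun x => (1 + ‖x‖ ^ 2) ^ (-(1 - ρ)) * ((1 + ‖x‖ ^ 2) * V x) := by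
    ext x
    have hx : (0 : ℝ) < 1 + ‖x‖ ^ 2 := by positivity
    rw [← mul_assoc, ← Real.rpow_add_one hx.ne']
    ring_nf
  rw [hsplit]
  rcases hp.eq_or_lt with rfl | hp
  · refine (memLp_one_iff_integrable.mp (by simpa using hV)).bdd_mul (c := 1)
      (by fun_prop : Measurable _).aestronglyMeasurable (ae_of_all _ fun x => ?_)
    rw [Real.norm_of_nonneg (by positivity)]
    exact Real.rpow_le_one_of_one_le_of_nonpos (by simp) (by linarith)
  · have hpq := Real.HolderConjugate.conjExponent hp
    have := hpq.symm.ennrealOfReal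
    rw [← memLp_one_iff_integrable]
    refine hV.mul' (memLp_one_add_norm_sq_rpow_neg (r := p.conjExponent) hpq.symm.pos ?_)
    rw [Real.conjExponent, mul_div_assoc', lt_div_iff₀ (by linarith)]
    linarith

end Weight

lemma MeasureTheory.Integrable.memLp_two_sqrt_abs {α : Type*} [MeasurableSpace α] {μ : Measure α} {g : α → ℝ}
    (hg : Integrable g μ) : MemLp (fun x => √|g x|) 2 μ := by
  have hmeas : AEStronglyMeasurable (fun x => √|g x|) μ :=
    hg.aemeasurable.abs.sqrt.aestronglyMeasurable
  refine (memLp_two_iff_integrable_sq hmeas).mpr (hg.abs.congr (ae_of_all _ fun x => ?_))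
  simp [Real.sq_sqrt (abs_nonneg (g x))]

lemma ae_fst_ne_snd {α : Type*} [MeasurableSpace α] [MeasurableEq α] {μ ν : Measure α}
    [SFinite ν] [NullSingletonClass ν] : ∀ᵐ z ∂μ.prod ν, z.1 ≠ z.2 := by
  refine (Measure.ae_prod_iff_ae_ae (p := fun z => z.1 ≠ z.2) measurableSet_diagonal.compl).2 ?_
  exact ae_of_all _ fun x => (measure_eq_zero_iff_ae_notMem.mp (measure_singleton (μ := ν) x)).mono
    fun y hy => Ne.symm hy

lemma eLpNorm_prod_mul {α β : Type*} [MeasurableSpace α] [MeasurableSpace β] {μ : Measure α}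
    {ν : Measure β} [SFinite ν] {f : α → ℝ} {g : β → ℝ} {p : ℝ≥0∞} (hp0 : p ≠ 0) (hp : p ≠ ∞)
    (hf : AEMeasurable f μ) (hg : AEMeasurable g ν) :
    eLpNorm (fun z : α × β => f z.1 * g z.2) p (μ.prod ν) = eLpNorm f p μ * eLpNorm g p ν := by
  simp only [eLpNorm_eq_lintegral_rpow_enorm_toReal hp0 hp, enorm_mul,
    ENNReal.mul_rpow_of_nonneg _ _ ENNReal.toReal_nonneg]
  rw [lintegral_prod_mul (f := fun x => ‖f x‖ₑ ^ p.toReal) (g := fun y => ‖g y‖ₑ ^ p.toReal)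
    (by fun_prop) (by fun_prop), ENNReal.mul_rpow_of_nonneg _ _ (by positivity)]

section Kernel

variable {E : Type*} [NormedAddCommGroup E] (a b : E → ℝ)

/-- The kernel of `b G₀(z) a − b D₀ a − (iz/4π) b ⊗ a`. -/
def remainderKernel (z : ℂ) (x : E × E) : ℂ :=
  (b x.1 : ℂ) * cexp (I * z * (‖x.1 - x.2‖ : ℝ)) * (a x.2 : ℂ)
      / (4 * (Real.pi : ℂ) * (‖x.1 - x.2‖ : ℝ))
    - (b x.1 : ℂ) * (a x.2 : ℂ) / (4 * (Real.pi : ℂ) * (‖x.1 - x.2‖ : ℝ))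
    - I * z / (4 * (Real.pi : ℂ)) * (b x.1 : ℂ) * (a x.2 : ℂ)

variable {a b} {ρ : ℝ} {z : ℂ}

lemma norm_remainderKernel_le (hρ0 : 0 ≤ ρ) (hρ1 : ρ ≤ 1) (hz : 0 ≤ z.im) {x : E × E}
    (hx : x.1 ≠ x.2) :
    ‖remainderKernel a b z x‖
      ≤ 3 / (4 * Real.pi) * ‖z‖ ^ (1 + ρ) * (|b x.1| * |a x.2| * ‖x.1 - x.2‖ ^ ρ) := by
  set r := ‖x.1 - x.2‖
  have hr : 0 < r := norm_sub_pos_iff.mpr hx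
  set w : ℂ := I * z * r
  have hw : w.re ≤ 0 := by
    simpa [w, Complex.mul_re] using mul_nonneg hz hr.le
  have hfactor : remainderKernel a b z x
      = (b x.1 : ℂ) * (a x.2 : ℂ) / (4 * (Real.pi : ℂ) * r) * (cexp w - 1 - w) := by
    have : ((‖x.1 - x.2‖ : ℝ) : ℂ) ≠ 0 := by exact_mod_cast hr.ne'
    simp only [remainderKernel, w, r]
    field_simp
  have hnorm : ‖(b x.1 : ℂ) * (a x.2 : ℂ) / (4 * (Real.pi : ℂ) * r)‖
      = |b x.1| * |a x.2| / (4 * Real.pi * r) := by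
    simp [abs_of_pos Real.pi_pos, abs_of_pos hr]
  have hnw : ‖w‖ = ‖z‖ * r := by simp [w, abs_of_pos hr]
  rw [hfactor, norm_mul, hnorm]
  calc |b x.1| * |a x.2| / (4 * Real.pi * r) * ‖cexp w - 1 - w‖
      ≤ |b x.1| * |a x.2| / (4 * Real.pi * r) * (3 * (‖z‖ * r) ^ (1 + ρ)) := by
        gcongr
        rw [← hnw]
        exact norm_cexp_sub_one_sub_le_rpow hρ0 hρ1 hw
    _ = _ := by
        rw [Real.mul_rpow (norm_nonneg z) hr.le, Real.rpow_add hr, Real.rpow_one]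
        field_simp

lemma norm_remainderKernel_le_weighted (hρ0 : 0 ≤ ρ) (hρ1 : ρ ≤ 1) (hz : 0 ≤ z.im)
    {x : E × E} (hx : x.1 ≠ x.2) :
    ‖remainderKernel a b z x‖ ≤ 3 / (4 * Real.pi) * ‖z‖ ^ (1 + ρ)
      * ((1 + ‖x.1‖ ^ 2) ^ (ρ / 2) * |b x.1|) * ((1 + ‖x.2‖ ^ 2) ^ (ρ / 2) * |a x.2|) := by
  refine (norm_remainderKernel_le hρ0 hρ1 hz hx).trans ?_
  calc 3 / (4 * Real.pi) * ‖z‖ ^ (1 + ρ) * (|b x.1| * |a x.2| * ‖x.1 - x.2‖ ^ ρ)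
      ≤ 3 / (4 * Real.pi) * ‖z‖ ^ (1 + ρ)
        * (|b x.1| * |a x.2| * ((1 + ‖x.1‖ ^ 2) ^ (ρ / 2) * (1 + ‖x.2‖ ^ 2) ^ (ρ / 2))) := by
        gcongr
        exact norm_sub_rpow_le_one_add_norm_sq_rpow_mul hρ0 x.1 x.2
    _ = _ := by ring

end Kernel

theorem expansion_of_bG0a_general (V : R3 → ℝ) (p q : ℝ) (hV : AssumptionV V p q)
    (a b : R3 → ℝ)
    (ha : a = fun x => Real.sqrt |V x|)
    (hb : b = fun x => Real.sqrt |V x| * Real.sign (V x))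
    (Ω : Set ℂ) (hΩ : ∀ k ∈ Ω, 0 ≤ k.im ∧ k ≠ 0)
    (ρ : ℝ) (hρpos : 0 < ρ) (hρ : ρ < min ((3 - p) / (2 * p)) 1) :
    ∃ C : ℝ, ∀ k ∈ Ω, ∀ ε : ℝ, 0 < ε → ε < 1 →
      eLpNorm (fun x : R3 × R3 =>
          (b x.1 : ℂ) * Complex.exp (Complex.I * (k * (ε : ℂ)) * (‖x.1 - x.2‖ : ℝ)) * (a x.2 : ℂ)
              / (4 * (Real.pi : ℂ) * (‖x.1 - x.2‖ : ℝ))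
            - (b x.1 : ℂ) * (a x.2 : ℂ) / (4 * (Real.pi : ℂ) * (‖x.1 - x.2‖ : ℝ))
            - Complex.I * (k * (ε : ℂ)) / (4 * (Real.pi : ℂ)) * (b x.1 : ℂ) * (a x.2 : ℂ))
          2 (volume : Measure (R3 × R3))
        ≤ ENNReal.ofReal (C * ‖k * (ε : ℂ)‖ ^ (1 + ρ)) := by
  obtain ⟨hp, -, -, hVp, -⟩ := hV
  obtain ⟨hρ₀, hρ1⟩ := lt_min_iff.mp hρ
  have hint : Integrable (fun x : R3 => (1 + ‖x‖ ^ 2) ^ ρ * V x) := by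
    refine integrable_one_add_norm_sq_rpow_mul hp hVp ?_
    rw [lt_div_iff₀ (by linarith)] at hρ₀
    simp only [finrank_euclideanSpace_fin]
    push_cast
    nlinarith
  set w : R3 → ℝ := fun x => √|(1 + ‖x‖ ^ 2) ^ ρ * V x|
  have hw : MemLp w 2 volume := hint.memLp_two_sqrt_abs
  refine ⟨3 / (4 * Real.pi) * (eLpNorm w 2 volume).toReal ^ 2, fun k hk ε hε _ => ?_⟩
  have hz : 0 ≤ (k * ε).im := by simpa using mul_nonneg (hΩ k hk).1 hε.le
  set c := 3 / (4 * Real.pi) * ‖k * (ε : ℂ)‖ ^ (1 + ρ)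
  rw [Measure.volume_eq_prod]
  calc eLpNorm (remainderKernel a b (k * ε)) 2 (volume.prod volume)
      ≤ eLpNorm (fun x : R3 × R3 => (c • w) x.1 * w x.2) 2 (volume.prod volume) := by
        refine eLpNorm_mono_ae_real (ae_fst_ne_snd.mono fun x hx => ?_)
        refine (norm_remainderKernel_le_weighted hρpos.le hρ1.le hz hx).trans_eq ?_
        simp only [ha, hb, abs_sqrt_abs_mul_sign, abs_of_nonneg (Real.sqrt_nonneg _),
          Real.rpow_div_two_mul_sqrt_abs (by positivity : (0 : ℝ) ≤ 1 + ‖_‖ ^ 2)]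
        rfl
    _ = ‖c‖ₑ * eLpNorm w 2 volume * eLpNorm w 2 volume := by
        rw [eLpNorm_prod_mul two_ne_zero ENNReal.ofNat_ne_top (hw.1.aemeasurable.const_smul c)
          hw.1.aemeasurable, eLpNorm_const_smul]
    _ = ENNReal.ofReal (3 / (4 * Real.pi) * (eLpNorm w 2 volume).toReal ^ 2
          * ‖k * (ε : ℂ)‖ ^ (1 + ρ)) := by
        rw [Real.enorm_of_nonneg (by positivity), ENNReal.ofReal_mul (by positivity),
          ENNReal.ofReal_mul (by positivity), ENNReal.ofReal_mul (by positivity),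
          ENNReal.ofReal_pow ENNReal.toReal_nonneg, ENNReal.ofReal_toReal hw.eLpNorm_ne_top]
        ring

/-- Hilbert–Schmidt expansion of `b G₀(kε) a` near threshold: for `V`
satisfying assumption (V) with exponent `p < 3/2`, `ρ₀ = (3−p)/(2p)`, every
`0 < ρ < min(ρ₀, 1)` and compact `Ω ⊂ {Im k ≥ 0} ∖ {0}`, there is `C` such that for all
`k ∈ Ω` and `0 < ε < 1` the kernel of `b G₀(kε) a − b D₀ a − (ikε/4π) b ⊗ a` has
`L²(ℝ³×ℝ³)`-norm (= Hilbert–Schmidt norm) at most `C |kε|^{1+ρ}`. -/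
theorem expansion_of_bG0a (V : R3 → ℝ) (p q : ℝ) (hV : AssumptionV V p q)
    (a b : R3 → ℝ)
    (ha : a = fun x => Real.sqrt |V x|)
    (hb : b = fun x => Real.sqrt |V x| * Real.sign (V x))
    (Ω : Set ℂ) (hΩc : IsCompact Ω) (hΩ : ∀ k ∈ Ω, 0 ≤ k.im ∧ k ≠ 0)
    (ρ : ℝ) (hρpos : 0 < ρ) (hρ : ρ < min ((3 - p) / (2 * p)) 1) :
    ∃ C : ℝ, ∀ k ∈ Ω, ∀ ε : ℝ, 0 < ε → ε < 1 →
      eLpNorm (fun x : R3 × R3 =>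
          (b x.1 : ℂ) * Complex.exp (Complex.I * (k * (ε : ℂ)) * (‖x.1 - x.2‖ : ℝ)) * (a x.2 : ℂ)
              / (4 * (Real.pi : ℂ) * (‖x.1 - x.2‖ : ℝ))
            - (b x.1 : ℂ) * (a x.2 : ℂ) / (4 * (Real.pi : ℂ) * (‖x.1 - x.2‖ : ℝ))
            - Complex.I * (k * (ε : ℂ)) / (4 * (Real.pi : ℂ)) * (b x.1 : ℂ) * (a x.2 : ℂ))
          2 (volume : Measure (R3 × R3))
        ≤ ENNReal.ofReal (C * ‖k * (ε : ℂ)‖ ^ (1 + ρ)) :=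
  expansion_of_bG0a_general V p q hV a b ha hb Ω hΩ ρ hρpos hρ
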